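/- arXiv:1910.13863 — 2 statements merged into one kernel-verified Lean document; each statement's English description precedes it below -/
import Mathlib

section
/- Let (A,·,α,β) be a BiHom-associative superalgebra with α,β bijective and let R be a Rota-Baxter operator of weight −1 on it. Let ∘ be the product x∘y = R(x)·y − (−1)^{|x||y|}(α⁻¹β(y))·R(αβ⁻¹(x)) − x·y. Then R is a Rota-Baxter operator of weight −1 on (A,∘,α,β), i.e. R(x)∘R(y) = R(R(x)∘y + x∘R(y) − x∘y) for all homogeneous x,y. -/
/-!
For a fixed operator `R`, the Rota-Baxter identity of weight `w` is linear in the product, so the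
products for which `R` is a Rota-Baxter operator form a submodule. By bilinearity `μ` belongs to
it as soon as the identity holds on homogeneous elements. Then so do `(x, y) ↦ μ (R x) y` and
`(x, y) ↦ μ (σ y) (R (τ x))` for all `σ, τ` commuting with `R`, here `σ = α⁻¹β` and `τ = αβ⁻¹`;
the product `∘` is a linear combination of these two products and `μ`.
-/

variable {K A : Type*} [CommRing K] [AddCommGroup A] [Module K A]

theorem LinearEquiv.symm_apply_comm {e : A ≃ₗ[K] A} {R : A →ₗ[K] A}
    (h : ∀ a, R (e a) = e (R a)) (a : A) : R (e.symm a) = e.symm (R a) := by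
  rw [e.eq_symm_apply, ← h, e.apply_symm_apply]

theorem LinearMap.ext_of_iSup_eq_top {ι N : Type*} [AddCommGroup N] [Module K N]
    {𝒜 : ι → Submodule K A} (h𝒜 : iSup 𝒜 = ⊤) {f g : A →ₗ[K] A →ₗ[K] N}
    (hfg : ∀ i j, ∀ x ∈ 𝒜 i, ∀ y ∈ 𝒜 j, f x y = g x y) : f = g := by
  have hspan : Submodule.span K (⋃ i, (𝒜 i : Set A)) = ⊤ := by
    rw [← Submodule.iSup_eq_span, h𝒜]
  refine LinearMap.ext_on hspan fun x hx => LinearMap.ext_on hspan fun y hy => ?_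
  obtain ⟨i, hx⟩ := Set.mem_iUnion.mp hx
  obtain ⟨j, hy⟩ := Set.mem_iUnion.mp hy
  exact hfg i j x hx y hy

def IsRotaBaxter (w : K) (R : A →ₗ[K] A) (p : A →ₗ[K] A →ₗ[K] A) : Prop :=
  ∀ x y, p (R x) (R y) = R (p (R x) y + p x (R y) + w • p x y)

namespace IsRotaBaxter

variable {w : K} {R : A →ₗ[K] A} {p q : A →ₗ[K] A →ₗ[K] A}

theorem of_homogeneous {ι : Type*} {𝒜 : ι → Submodule K A} (h𝒜 : iSup 𝒜 = ⊤)
    (h : ∀ i j, ∀ x ∈ 𝒜 i, ∀ y ∈ 𝒜 j, p (R x) (R y) = R (p (R x) y + p x (R y) + w • p x y)) :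
    IsRotaBaxter w R p := by
  have key : p.compl₁₂ R R = (p.compl₁₂ R LinearMap.id + p.compl₂ R + w • p).compr₂ R :=
    LinearMap.ext_of_iSup_eq_top h𝒜 h
  exact fun x y => LinearMap.congr_fun₂ key x y

theorem add (hp : IsRotaBaxter w R p) (hq : IsRotaBaxter w R q) : IsRotaBaxter w R (p + q) := by
  intro x y
  simp only [LinearMap.add_apply, hp x y, hq x y, smul_add, ← map_add]
  abel_nf

theorem smul (hp : IsRotaBaxter w R p) (c : K) : IsRotaBaxter w R (c • p) := by
  intro x y
  change c • p (R x) (R y) = R (c • p (R x) y + c • p x (R y) + w • c • p x y)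
  rw [hp x y, smul_comm w c, ← smul_add, ← smul_add, map_smul]

theorem neg (hp : IsRotaBaxter w R p) : IsRotaBaxter w R (-p) := by
  rw [← neg_one_smul K p]
  exact hp.smul (-1)

theorem sub (hp : IsRotaBaxter w R p) (hq : IsRotaBaxter w R q) : IsRotaBaxter w R (p - q) := by
  simpa only [sub_eq_add_neg] using hp.add hq.neg

theorem flip (hp : IsRotaBaxter w R p) : IsRotaBaxter w R p.flip := by
  intro x y
  simp only [LinearMap.flip_apply, hp y x, add_comm (p (R y) x)]

theorem compl₁₂ (hp : IsRotaBaxter w R p) {σ τ : A →ₗ[K] A}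
    (hσ : ∀ a, R (σ a) = σ (R a)) (hτ : ∀ a, R (τ a) = τ (R a)) :
    IsRotaBaxter w R (p.compl₁₂ σ τ) := by
  intro x y
  simp only [LinearMap.compl₁₂_apply, ← hσ, ← hτ, hp (σ x) (τ y)]

theorem compl₂_self (hp : IsRotaBaxter w R p) : IsRotaBaxter w R (p.compl₂ R) := by
  intro x y
  simp only [LinearMap.compl₂_apply, hp x (R y)]

theorem compl₁₂_self_id (hp : IsRotaBaxter w R p) :
    IsRotaBaxter w R (p.compl₁₂ R LinearMap.id) := by
  intro x y
  simp only [LinearMap.compl₁₂_apply, LinearMap.id_apply, hp (R x) y]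

end IsRotaBaxter

theorem statement8_general
    (K : Type) [Field K]
    (A : Type) [AddCommGroup A] [Module K A]
    (𝒜 : ZMod 2 → Submodule K A)
    (hA : DirectSum.IsInternal 𝒜)
    (μ : A →ₗ[K] A →ₗ[K] A)
    (α β : A ≃ₗ[K] A)
    -- R is a Rota-Baxter operator of weight −1
    (R : A →ₗ[K] A)
    (hRα : ∀ a, R (α a) = α (R a))
    (hRβ : ∀ a, R (β a) = β (R a))
    (hRB : ∀ i j : ZMod 2, ∀ x ∈ 𝒜 i, ∀ y ∈ 𝒜 j,
      μ (R x) (R y) = R (μ (R x) y + μ x (R y) - μ x y))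
    -- the product ∘
    (m : ZMod 2 → ZMod 2 → A → A → A)
    (hm : ∀ i j x y, m i j x y
      = μ (R x) y
        - ((-1 : K) ^ (i.val * j.val)) • μ (α.symm (β y)) (R (α (β.symm x)))
        - μ x y) :
    -- R is a Rota-Baxter operator of weight −1 on `(A,∘,α,β)`:
    ∀ i j : ZMod 2, ∀ x ∈ 𝒜 i, ∀ y ∈ 𝒜 j,
      m i j (R x) (R y) = R (m i j (R x) y + m i j x (R y) - m i j x y) := by
  intro i j x _ y _
  have hμ : IsRotaBaxter (-1) R μ :=
    .of_homogeneous hA.submodule_iSup_eq_top (by simpa only [neg_one_smul, ← sub_eq_add_neg] using hRB)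
  set σ : A →ₗ[K] A := α.symm.toLinearMap ∘ₗ β.toLinearMap
  set τ : A →ₗ[K] A := α.toLinearMap ∘ₗ β.symm.toLinearMap
  have hσ : ∀ a, R (σ a) = σ (R a) := fun a => by simp [σ, LinearEquiv.symm_apply_comm hRα, hRβ]
  have hτ : ∀ a, R (τ a) = τ (R a) := fun a => by simp [τ, hRα, LinearEquiv.symm_apply_comm hRβ]
  have hcirc := ((hμ.compl₁₂_self_id.sub
    ((hμ.compl₂_self.compl₁₂ hσ hτ).flip.smul ((-1 : K) ^ (i.val * j.val)))).sub hμ) x y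
  simp only [LinearMap.sub_apply, LinearMap.smul_apply, LinearMap.flip_apply,
    LinearMap.compl₁₂_apply, LinearMap.compl₂_apply, LinearMap.id_apply, LinearMap.comp_apply,
    LinearEquiv.coe_coe, σ, τ, neg_one_smul, ← sub_eq_add_neg] at hcirc
  rw [hm, hm, hm, hm, hcirc]

theorem statement8
    (K : Type) [Field K] [CharZero K]
    (A : Type) [AddCommGroup A] [Module K A]
    (𝒜 : ZMod 2 → Submodule K A)
    (hA : DirectSum.IsInternal 𝒜)
    (μ : A →ₗ[K] A →ₗ[K] A)
    (α β : A ≃ₗ[K] A)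
    (hcomm : ∀ a, α (β a) = β (α a))
    (hαe : ∀ i : ZMod 2, ∀ a ∈ 𝒜 i, α a ∈ 𝒜 i)
    (hβe : ∀ i : ZMod 2, ∀ a ∈ 𝒜 i, β a ∈ 𝒜 i)
    (hμe : ∀ i j : ZMod 2, ∀ a ∈ 𝒜 i, ∀ b ∈ 𝒜 j, μ a b ∈ 𝒜 (i + j))
    (hαm : ∀ a b : A, α (μ a b) = μ (α a) (α b))
    (hβm : ∀ a b : A, β (μ a b) = μ (β a) (β b))
    (hass : ∀ a b c : A, μ (α a) (μ b c) = μ (μ a b) (β c))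
    -- R is a Rota-Baxter operator of weight −1
    (R : A →ₗ[K] A)
    (hRe : ∀ i : ZMod 2, ∀ a ∈ 𝒜 i, R a ∈ 𝒜 i)
    (hRα : ∀ a, R (α a) = α (R a))
    (hRβ : ∀ a, R (β a) = β (R a))
    (hRB : ∀ i j : ZMod 2, ∀ x ∈ 𝒜 i, ∀ y ∈ 𝒜 j,
      μ (R x) (R y) = R (μ (R x) y + μ x (R y) - μ x y))
    -- the product ∘
    (m : ZMod 2 → ZMod 2 → A → A → A)
    (hm : ∀ i j x y, m i j x y
      = μ (R x) y
        - ((-1 : K) ^ (i.val * j.val)) • μ (α.symm (β y)) (R (α (β.symm x)))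
        - μ x y) :
    -- R is a Rota-Baxter operator of weight −1 on `(A,∘,α,β)`:
    ∀ i j : ZMod 2, ∀ x ∈ 𝒜 i, ∀ y ∈ 𝒜 j,
      m i j (R x) (R y) = R (m i j (R x) y + m i j x (R y) - m i j x y) :=
  statement8_general K A 𝒜 hA μ α β R hRα hRβ hRB m hm
end

section
/- Let (A,▷,◁,α,β) be a BiHom-L-dendriform superalgebra with α,β bijective. Then: (1) the product x∘y = x▷y − (−1)^{|x||y|}(α⁻¹β(y))◁(αβ⁻¹(x)) makes (A,∘,α,β) a BiHom-pre-Lie superalgebra (the associated vertical BiHom-pre-Lie superalgebra); (2) the product x•y = x▷y + x◁y makes (A,•,α,β) a BiHom-pre-Lie superalgebra (the associated horizontal BiHom-pre-Lie superalgebra). -/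
/-!
The BiHom-pre-Lie identity of the horizontal product `▷ + ◁` at homogeneous `(x, y, z)` is a
linear combination of the first dendriform axiom at `(x, y, z)` and of the second one at
`(x, y, z)` and at `(y, x, z)`.

The vertical product is the horizontal product of the pair `(▷, ◁')`, where
`x ◁' y = −(−1)^{|x||y|} (α⁻¹β y) ◁ (αβ⁻¹ x)`, and this pair is again BiHom-L-dendriform: the
first axiom is invariant under `◁ ↦ ◁'`, and the second axiom for `◁'` at `(x, y, z)` is, up to
the sign `−(−1)^{|y||z|}`, the second axiom for `◁` at `(x, α⁻²β z, α²β⁻¹ y)`. The direct sum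
decomposition is what makes `α⁻¹` and `β⁻¹` preserve degrees.
-/

open DirectSum

theorem DirectSum.IsInternal.symm_mem {ι R M : Type*} [DecidableEq ι] [Ring R] [AddCommGroup M]
    [Module R M] {𝒜 : ι → Submodule R M} (h : IsInternal 𝒜) {f : M ≃ₗ[R] M}
    (hf : ∀ i, ∀ a ∈ 𝒜 i, f a ∈ 𝒜 i) {i : ι} {a : M} (ha : a ∈ 𝒜 i) : f.symm a ∈ 𝒜 i := by
  have hmap : (fun j => (𝒜 j).map (f : M →ₗ[R] M)) = 𝒜 := by
    refine (h.submodule_iSupIndep.le_iff_eq_of_iSup_eq_top ?_).mp fun j =>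
      Submodule.map_le_iff_le_comap.mpr (hf j)
    rw [← Submodule.map_iSup, h.submodule_iSup_eq_top, Submodule.map_top, LinearEquiv.range]
  rw [← congrFun hmap i, Submodule.mem_map_equiv] at ha
  exact ha

section LinearEquiv

variable {R M : Type*} [Semiring R] [AddCommMonoid M] [Module R M]

theorem LinearEquiv.symm_apply_comm_s10 {g : M ≃ₗ[R] M} {f : M → M} (h : ∀ a, g (f a) = f (g a))
    (a : M) : g.symm (f a) = f (g.symm a) :=
  g.injective (by rw [h, LinearEquiv.apply_symm_apply, LinearEquiv.apply_symm_apply])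

theorem LinearEquiv.symm_map₂ {g : M ≃ₗ[R] M} {μ : M → M → M}
    (h : ∀ a b, g (μ a b) = μ (g a) (g b)) (a b : M) :
    g.symm (μ a b) = μ (g.symm a) (g.symm b) :=
  g.injective (by rw [h, LinearEquiv.apply_symm_apply, LinearEquiv.apply_symm_apply,
    LinearEquiv.apply_symm_apply])

end LinearEquiv

def superSign (K : Type*) [CommRing K] (i j : ZMod 2) : K := (-1) ^ (i.val * j.val)

section SuperSign

variable {K : Type*} [CommRing K]

theorem superSign_comm (i j : ZMod 2) : superSign K i j = superSign K j i := by
  rw [superSign, superSign, mul_comm]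

theorem superSign_add_left (i j k : ZMod 2) :
    superSign K (i + j) k = superSign K i k * superSign K j k := by
  rw [superSign, superSign, superSign, ← pow_add, ← add_mul, neg_one_pow_eq_pow_mod_two,
    Nat.mul_mod, ZMod.val_add, Nat.mod_mod, ← Nat.mul_mod, ← neg_one_pow_eq_pow_mod_two]

theorem superSign_add_right (i j k : ZMod 2) :
    superSign K i (j + k) = superSign K i j * superSign K i k := by
  rw [superSign_comm, superSign_add_left, superSign_comm j, superSign_comm k]

theorem superSign_mul_self (i j : ZMod 2) : superSign K i j * superSign K i j = 1 := by
  rw [superSign, ← mul_pow, neg_one_mul, neg_neg, one_pow]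

theorem superSign_mul_self_mul (i j : ZMod 2) (a : K) :
    superSign K i j * (superSign K i j * a) = a := by
  rw [← mul_assoc, superSign_mul_self, one_mul]

end SuperSign

section Identities

variable {K A : Type*} [CommRing K] [AddCommGroup A] [Module K A]

/- The products are indexed by the degrees of their two arguments (`P i j x y` is only evaluated
at `x ∈ 𝒜 i`, `y ∈ 𝒜 j`), so that degree-dependent products such as `◁'` fit. -/
def BiHomLDendriformIdentities (𝒜 : ZMod 2 → Submodule K A) (α β : A → A)
    (P Q : ZMod 2 → ZMod 2 → A →ₗ[K] A →ₗ[K] A) : Prop :=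
  (∀ i j k : ZMod 2, ∀ x ∈ 𝒜 i, ∀ y ∈ 𝒜 j, ∀ z ∈ 𝒜 k,
    P i (j + k) (α (β x)) (P j k (α y) z)
      = P (i + j) k (P i j (β x) (α y)) (β z) + P (i + j) k (Q i j (β x) (α y)) (β z)
        + superSign K i j • P j (i + k) (α (β y)) (P i k (α x) z)
        - superSign K i j • P (j + i) k (Q j i (β y) (α x)) (β z)
        - superSign K i j • P (j + i) k (P j i (β y) (α x)) (β z)) ∧
  (∀ i j k : ZMod 2, ∀ x ∈ 𝒜 i, ∀ y ∈ 𝒜 j, ∀ z ∈ 𝒜 k,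
    P i (j + k) (α (β x)) (Q j k (α y) z)
      = Q (i + j) k (P i j (β x) (α y)) (β z)
        + superSign K i j • Q j (i + k) (α (β y)) (P i k (α x) z)
        + superSign K i j • Q j (i + k) (α (β y)) (Q i k (α x) z)
        - superSign K i j • Q (j + i) k (Q j i (β y) (α x)) (β z))

def BiHomPreLieIdentity (𝒜 : ZMod 2 → Submodule K A) (α β : A → A)
    (μ : ZMod 2 → ZMod 2 → A → A → A) : Prop :=
  ∀ i j k : ZMod 2, ∀ x ∈ 𝒜 i, ∀ y ∈ 𝒜 j, ∀ z ∈ 𝒜 k,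
    μ (i + j) k (μ i j (β x) (α y)) (β z) - μ i (j + k) (α (β x)) (μ j k (α y) z)
      = superSign K i j •
          (μ (j + i) k (μ j i (β y) (α x)) (β z) - μ j (i + k) (α (β y)) (μ i k (α x) z))

theorem BiHomLDendriformIdentities.biHomPreLieIdentity_add {𝒜 : ZMod 2 → Submodule K A}
    {α β : A → A} {P Q : ZMod 2 → ZMod 2 → A →ₗ[K] A →ₗ[K] A}
    (h : BiHomLDendriformIdentities 𝒜 α β P Q) :
    BiHomPreLieIdentity 𝒜 α β fun i j x y => P i j x y + Q i j x y := by
  intro i j k x hx y hy z hz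
  have h₁ := h.1 i j k x hx y hy z hz
  have h₂ := h.2 i j k x hx y hy z hz
  have h₃ := congrArg (superSign K i j • ·) (h.2 j i k y hy x hx z hz)
  simp only [smul_add, smul_sub, smul_smul, superSign_comm j i, superSign_mul_self,
    one_smul] at h₃
  simp only [map_add, LinearMap.add_apply]
  linear_combination (norm := module) -h₁ - h₂ + h₃

def verticalPartner (tl : A →ₗ[K] A →ₗ[K] A) (α β : A ≃ₗ[K] A) (i j : ZMod 2) :
    A →ₗ[K] A →ₗ[K] A :=
  -superSign K i j • (tl.compl₁₂ (α.symm.toLinearMap ∘ₗ β.toLinearMap)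
    (α.toLinearMap ∘ₗ β.symm.toLinearMap)).flip

theorem verticalPartner_apply (tl : A →ₗ[K] A →ₗ[K] A) (α β : A ≃ₗ[K] A) (i j : ZMod 2)
    (x y : A) :
    verticalPartner tl α β i j x y = -(superSign K i j • tl (α.symm (β y)) (α (β.symm x))) := by
  simp [verticalPartner]

theorem verticalPartner_mem {𝒜 : ZMod 2 → Submodule K A} (hA : IsInternal 𝒜)
    {tl : A →ₗ[K] A →ₗ[K] A} {α β : A ≃ₗ[K] A}
    (hαe : ∀ i : ZMod 2, ∀ a ∈ 𝒜 i, α a ∈ 𝒜 i) (hβe : ∀ i : ZMod 2, ∀ a ∈ 𝒜 i, β a ∈ 𝒜 i)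
    (htle : ∀ i j : ZMod 2, ∀ x ∈ 𝒜 i, ∀ y ∈ 𝒜 j, tl x y ∈ 𝒜 (i + j))
    {i j : ZMod 2} {x y : A} (hx : x ∈ 𝒜 i) (hy : y ∈ 𝒜 j) :
    verticalPartner tl α β i j x y ∈ 𝒜 (i + j) := by
  rw [verticalPartner_apply, add_comm i j]
  exact neg_mem (Submodule.smul_mem _ _
    (htle j i _ (hA.symm_mem hαe (hβe j y hy)) _ (hαe i _ (hA.symm_mem hβe hx))))

theorem map_verticalPartner {F : Type*} [FunLike F A A] [LinearMapClass F K A A] (f : F)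
    {tl : A →ₗ[K] A →ₗ[K] A} {α β : A ≃ₗ[K] A} (hfα : ∀ a, f (α a) = α (f a))
    (hfβ : ∀ a, f (β a) = β (f a)) (hftl : ∀ a b, f (tl a b) = tl (f a) (f b))
    (i j : ZMod 2) (x y : A) :
    f (verticalPartner tl α β i j x y) = verticalPartner tl α β i j (f x) (f y) := by
  have hfα' : ∀ a, f (α.symm a) = α.symm (f a) := fun a =>
    (LinearEquiv.symm_apply_comm_s10 (fun a => (hfα a).symm) a).symm
  have hfβ' : ∀ a, f (β.symm a) = β.symm (f a) := fun a =>
    (LinearEquiv.symm_apply_comm_s10 (fun a => (hfβ a).symm) a).symm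
  simp only [verticalPartner_apply, map_neg, map_smul, hftl, hfα, hfβ, hfα', hfβ']

theorem BiHomLDendriformIdentities.verticalPartner {𝒜 : ZMod 2 → Submodule K A}
    (hA : IsInternal 𝒜) {tr tl : A →ₗ[K] A →ₗ[K] A} {α β : A ≃ₗ[K] A}
    (hcomm : ∀ a, α (β a) = β (α a))
    (hαe : ∀ i : ZMod 2, ∀ a ∈ 𝒜 i, α a ∈ 𝒜 i) (hβe : ∀ i : ZMod 2, ∀ a ∈ 𝒜 i, β a ∈ 𝒜 i)
    (hαtr : ∀ a b : A, α (tr a b) = tr (α a) (α b))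
    (hαtl : ∀ a b : A, α (tl a b) = tl (α a) (α b))
    (hβtr : ∀ a b : A, β (tr a b) = tr (β a) (β b))
    (hβtl : ∀ a b : A, β (tl a b) = tl (β a) (β b))
    (h : BiHomLDendriformIdentities 𝒜 α β (fun _ _ => tr) fun _ _ => tl) :
    BiHomLDendriformIdentities 𝒜 α β (fun _ _ => tr) (verticalPartner tl α β) := by
  have hα'β : ∀ a, α.symm (β a) = β (α.symm a) := LinearEquiv.symm_apply_comm_s10 hcomm
  have hαβ' : ∀ a, α (β.symm a) = β.symm (α a) := fun a =>
    (LinearEquiv.symm_apply_comm_s10 (fun a => (hcomm a).symm) a).symm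
  constructor
  · intro i j k x hx y hy z hz
    have h₁ := h.1 i j k x hx y hy z hz
    simp only [verticalPartner_apply, map_neg, map_smul, LinearMap.neg_apply,
      LinearMap.smul_apply, smul_neg, smul_smul, superSign_comm j i, superSign_mul_self,
      one_smul, hα'β, hcomm, LinearEquiv.symm_apply_apply] at h₁ ⊢
    linear_combination (norm := module) h₁
  · intro i j k x hx y hy z hz
    have h₂ := h.2 i k j x hx (α.symm (α.symm (β z)))
      (hA.symm_mem hαe (hA.symm_mem hαe (hβe k z hz)))
      (α (α (β.symm y))) (hαe j _ (hαe j _ (hA.symm_mem hβe hy)))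
    -- normal form: `α^{±1}`, `β^{±1}` pushed inside the products, `β`'s outside `α`'s
    simp only [verticalPartner_apply, map_neg, map_smul, LinearMap.neg_apply,
      LinearMap.smul_apply, smul_neg, smul_smul, hα'β, hαβ', hcomm, LinearEquiv.symm_map₂ hαtr,
      LinearEquiv.symm_map₂ hαtl, LinearEquiv.symm_map₂ hβtr, LinearEquiv.symm_map₂ hβtl,
      hαtr, hαtl, hβtr, hβtl, LinearEquiv.symm_apply_apply, LinearEquiv.apply_symm_apply,
      superSign_comm j i, superSign_add_left, superSign_add_right] at h₂ ⊢
    simp only [mul_comm, mul_left_comm, superSign_mul_self_mul] at h₂ ⊢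
    linear_combination (norm := module) -superSign K j k • h₂

end Identities

theorem statement10_general
    (K : Type) [Field K]
    (A : Type) [AddCommGroup A] [Module K A]
    (𝒜 : ZMod 2 → Submodule K A)
    (hA : DirectSum.IsInternal 𝒜)
    (tr tl : A →ₗ[K] A →ₗ[K] A)
    (α β : A ≃ₗ[K] A)
    (hcomm : ∀ a, α (β a) = β (α a))
    (hαe : ∀ i : ZMod 2, ∀ a ∈ 𝒜 i, α a ∈ 𝒜 i)
    (hβe : ∀ i : ZMod 2, ∀ a ∈ 𝒜 i, β a ∈ 𝒜 i)
    (htre : ∀ i j : ZMod 2, ∀ x ∈ 𝒜 i, ∀ y ∈ 𝒜 j, tr x y ∈ 𝒜 (i + j))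
    (htle : ∀ i j : ZMod 2, ∀ x ∈ 𝒜 i, ∀ y ∈ 𝒜 j, tl x y ∈ 𝒜 (i + j))
    (hαtr : ∀ a b : A, α (tr a b) = tr (α a) (α b))
    (hαtl : ∀ a b : A, α (tl a b) = tl (α a) (α b))
    (hβtr : ∀ a b : A, β (tr a b) = tr (β a) (β b))
    (hβtl : ∀ a b : A, β (tl a b) = tl (β a) (β b))
    -- BiHom-L-dendriform axioms
    (hax1 : ∀ i j k : ZMod 2, ∀ x ∈ 𝒜 i, ∀ y ∈ 𝒜 j, ∀ z ∈ 𝒜 k,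
      tr (α (β x)) (tr (α y) z)
        = tr (tr (β x) (α y)) (β z) + tr (tl (β x) (α y)) (β z)
          + ((-1 : K) ^ (i.val * j.val)) • tr (α (β y)) (tr (α x) z)
          - ((-1 : K) ^ (i.val * j.val)) • tr (tl (β y) (α x)) (β z)
          - ((-1 : K) ^ (i.val * j.val)) • tr (tr (β y) (α x)) (β z))
    (hax2 : ∀ i j k : ZMod 2, ∀ x ∈ 𝒜 i, ∀ y ∈ 𝒜 j, ∀ z ∈ 𝒜 k,
      tr (α (β x)) (tl (α y) z)
        = tl (tr (β x) (α y)) (β z)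
          + ((-1 : K) ^ (i.val * j.val)) • tl (α (β y)) (tr (α x) z)
          + ((-1 : K) ^ (i.val * j.val)) • tl (α (β y)) (tl (α x) z)
          - ((-1 : K) ^ (i.val * j.val)) • tl (tl (β y) (α x)) (β z))
    -- the vertical product ∘ and the horizontal product •
    (m : ZMod 2 → ZMod 2 → A → A → A)
    (hm : ∀ i j x y, m i j x y
      = tr x y - ((-1 : K) ^ (i.val * j.val)) • tl (α.symm (β y)) (α (β.symm x)))
    (b : A → A → A)
    (hb : ∀ x y, b x y = tr x y + tl x y) :
    -- (1) the vertical product makes `A` a BiHom-pre-Lie superalgebra: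
    ((∀ i j : ZMod 2, ∀ x ∈ 𝒜 i, ∀ y ∈ 𝒜 j, m i j x y ∈ 𝒜 (i + j))
      ∧ (∀ i j : ZMod 2, ∀ x ∈ 𝒜 i, ∀ y ∈ 𝒜 j, α (m i j x y) = m i j (α x) (α y))
      ∧ (∀ i j : ZMod 2, ∀ x ∈ 𝒜 i, ∀ y ∈ 𝒜 j, β (m i j x y) = m i j (β x) (β y))
      ∧ (∀ i j k : ZMod 2, ∀ x ∈ 𝒜 i, ∀ y ∈ 𝒜 j, ∀ z ∈ 𝒜 k,
          m (i + j) k (m i j (β x) (α y)) (β z)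
            - m i (j + k) (α (β x)) (m j k (α y) z)
            = ((-1 : K) ^ (i.val * j.val)) •
                (m (j + i) k (m j i (β y) (α x)) (β z)
                  - m j (i + k) (α (β y)) (m i k (α x) z))))
    -- (2) the horizontal product makes `A` a BiHom-pre-Lie superalgebra:
    ∧ ((∀ i j : ZMod 2, ∀ x ∈ 𝒜 i, ∀ y ∈ 𝒜 j, b x y ∈ 𝒜 (i + j))
      ∧ (∀ x y : A, α (b x y) = b (α x) (α y))
      ∧ (∀ x y : A, β (b x y) = b (β x) (β y))
      ∧ (∀ i j k : ZMod 2, ∀ x ∈ 𝒜 i, ∀ y ∈ 𝒜 j, ∀ z ∈ 𝒜 k,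
          b (b (β x) (α y)) (β z) - b (α (β x)) (b (α y) z)
            = ((-1 : K) ^ (i.val * j.val)) •
                (b (b (β y) (α x)) (β z) - b (α (β y)) (b (α x) z)))) := by
  have hdend : BiHomLDendriformIdentities 𝒜 α β (fun _ _ => tr) fun _ _ => tl := ⟨hax1, hax2⟩
  obtain rfl : m = fun i j x y => tr x y + verticalPartner tl α β i j x y := by
    funext i j x y
    rw [hm, verticalPartner_apply, sub_eq_add_neg, superSign]
  obtain rfl : b = fun x y => tr x y + tl x y := funext₂ hb
  refine ⟨⟨?_, ?_, ?_, ?_⟩, ?_, ?_, ?_, hdend.biHomPreLieIdentity_add⟩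
  · exact fun i j x hx y hy =>
      add_mem (htre i j x hx y hy) (verticalPartner_mem hA hαe hβe htle hx hy)
  · intro i j x _ y _
    simp only [map_add, hαtr, map_verticalPartner α (fun _ => rfl) hcomm hαtl]
  · intro i j x _ y _
    simp only [map_add, hβtr, map_verticalPartner β (fun a => (hcomm a).symm) (fun _ => rfl) hβtl]
  · exact (hdend.verticalPartner hA hcomm hαe hβe hαtr hαtl hβtr hβtl).biHomPreLieIdentity_add
  · exact fun i j x hx y hy => add_mem (htre i j x hx y hy) (htle i j x hx y hy)
  · intro x y
    simp only [map_add, hαtr, hαtl]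
  · intro x y
    simp only [map_add, hβtr, hβtl]

theorem statement10
    (K : Type) [Field K] [CharZero K]
    (A : Type) [AddCommGroup A] [Module K A]
    (𝒜 : ZMod 2 → Submodule K A)
    (hA : DirectSum.IsInternal 𝒜)
    (tr tl : A →ₗ[K] A →ₗ[K] A)
    (α β : A ≃ₗ[K] A)
    (hcomm : ∀ a, α (β a) = β (α a))
    (hαe : ∀ i : ZMod 2, ∀ a ∈ 𝒜 i, α a ∈ 𝒜 i)
    (hβe : ∀ i : ZMod 2, ∀ a ∈ 𝒜 i, β a ∈ 𝒜 i)
    (htre : ∀ i j : ZMod 2, ∀ x ∈ 𝒜 i, ∀ y ∈ 𝒜 j, tr x y ∈ 𝒜 (i + j))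
    (htle : ∀ i j : ZMod 2, ∀ x ∈ 𝒜 i, ∀ y ∈ 𝒜 j, tl x y ∈ 𝒜 (i + j))
    (hαtr : ∀ a b : A, α (tr a b) = tr (α a) (α b))
    (hαtl : ∀ a b : A, α (tl a b) = tl (α a) (α b))
    (hβtr : ∀ a b : A, β (tr a b) = tr (β a) (β b))
    (hβtl : ∀ a b : A, β (tl a b) = tl (β a) (β b))
    -- BiHom-L-dendriform axioms
    (hax1 : ∀ i j k : ZMod 2, ∀ x ∈ 𝒜 i, ∀ y ∈ 𝒜 j, ∀ z ∈ 𝒜 k,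
      tr (α (β x)) (tr (α y) z)
        = tr (tr (β x) (α y)) (β z) + tr (tl (β x) (α y)) (β z)
          + ((-1 : K) ^ (i.val * j.val)) • tr (α (β y)) (tr (α x) z)
          - ((-1 : K) ^ (i.val * j.val)) • tr (tl (β y) (α x)) (β z)
          - ((-1 : K) ^ (i.val * j.val)) • tr (tr (β y) (α x)) (β z))
    (hax2 : ∀ i j k : ZMod 2, ∀ x ∈ 𝒜 i, ∀ y ∈ 𝒜 j, ∀ z ∈ 𝒜 k,
      tr (α (β x)) (tl (α y) z)
        = tl (tr (β x) (α y)) (β z)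
          + ((-1 : K) ^ (i.val * j.val)) • tl (α (β y)) (tr (α x) z)
          + ((-1 : K) ^ (i.val * j.val)) • tl (α (β y)) (tl (α x) z)
          - ((-1 : K) ^ (i.val * j.val)) • tl (tl (β y) (α x)) (β z))
    -- the vertical product ∘ and the horizontal product •
    (m : ZMod 2 → ZMod 2 → A → A → A)
    (hm : ∀ i j x y, m i j x y
      = tr x y - ((-1 : K) ^ (i.val * j.val)) • tl (α.symm (β y)) (α (β.symm x)))
    (b : A → A → A)
    (hb : ∀ x y, b x y = tr x y + tl x y) :
    -- (1) the vertical product makes `A` a BiHom-pre-Lie superalgebra: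
    ((∀ i j : ZMod 2, ∀ x ∈ 𝒜 i, ∀ y ∈ 𝒜 j, m i j x y ∈ 𝒜 (i + j))
      ∧ (∀ i j : ZMod 2, ∀ x ∈ 𝒜 i, ∀ y ∈ 𝒜 j, α (m i j x y) = m i j (α x) (α y))
      ∧ (∀ i j : ZMod 2, ∀ x ∈ 𝒜 i, ∀ y ∈ 𝒜 j, β (m i j x y) = m i j (β x) (β y))
      ∧ (∀ i j k : ZMod 2, ∀ x ∈ 𝒜 i, ∀ y ∈ 𝒜 j, ∀ z ∈ 𝒜 k,
          m (i + j) k (m i j (β x) (α y)) (β z)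
            - m i (j + k) (α (β x)) (m j k (α y) z)
            = ((-1 : K) ^ (i.val * j.val)) •
                (m (j + i) k (m j i (β y) (α x)) (β z)
                  - m j (i + k) (α (β y)) (m i k (α x) z))))
    -- (2) the horizontal product makes `A` a BiHom-pre-Lie superalgebra:
    ∧ ((∀ i j : ZMod 2, ∀ x ∈ 𝒜 i, ∀ y ∈ 𝒜 j, b x y ∈ 𝒜 (i + j))
      ∧ (∀ x y : A, α (b x y) = b (α x) (α y))
      ∧ (∀ x y : A, β (b x y) = b (β x) (β y))
      ∧ (∀ i j k : ZMod 2, ∀ x ∈ 𝒜 i, ∀ y ∈ 𝒜 j, ∀ z ∈ 𝒜 k,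
          b (b (β x) (α y)) (β z) - b (α (β x)) (b (α y) z)
            = ((-1 : K) ^ (i.val * j.val)) •
                (b (b (β y) (α x)) (β z) - b (α (β y)) (b (α x) z)))) :=
  statement10_general K A 𝒜 hA tr tl α β hcomm hαe hβe htre htle hαtr hαtl hβtr hβtl hax1 hax2 m hm
    b hb
end
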